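/- (Ky Fan, n = 1 case) Let K be an antipodally symmetric triangulation of the circle S^1 with free simplicial involution ν, and λ : vert(K) → {±1,...,±m} a labelling with λ(ν(v)) = -λ(v) for all v and λ(v)+λ(v') ≠ 0 for all edges. Then m ≥ 2, and the number of edges {v,v'} of K whose label pair is of the form {+i, -j} with 1 ≤ i < j ≤ m is odd. -/

import Mathlib

/-!
Along the circle, the sign of the label changes exactly at the edges whose label pair is
`{+i, -j}` or `{-i, +j}` (no edge carries `{+i, -i}`), and those with the negative label larger
in absolute value are the ones counted. The antipodal map swaps the two kinds, so the counted
edges are as many as the sign changes on the half circle from vertex `0` to vertex `N`; since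
the labels at its ends have opposite signs, there is an odd number of them. A counted edge
`{+i, -j}` with `i < j ≤ m` forces `m ≥ 2`.
-/

open Classical Finset

theorem odd_card_filter_range_changes_iff (p : ℕ → Prop) [DecidablePred p] (n : ℕ) :
    Odd #{k ∈ range n | ¬(p k ↔ p (k + 1))} ↔ ¬(p 0 ↔ p n) := by
  induction n with
  | zero => simp
  | succ n ih =>
    rw [range_add_one, filter_insert]
    split_ifs with h
    · rw [ih]
      tauto
    · rw [card_insert_of_notMem (by simp), Nat.odd_add_one, ih]
      tauto

theorem ZMod.card_filter_univ_eq_card_filter_range (n : ℕ) [NeZero n] (p : ZMod n → Prop)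
    [DecidablePred p] : #{i : ZMod n | p i} = #((range n).filter fun k : ℕ => p k) :=
  card_nbij' (fun i : ZMod n => i.val) (fun k : ℕ => (k : ZMod n))
    (fun i hi => by simpa [ZMod.val_lt] using hi)
    (fun k hk => mem_filter.mpr ⟨mem_univ _, (mem_filter.mp hk).2⟩)
    (fun i _ => ZMod.natCast_zmod_val i)
    (fun k hk => ZMod.val_cast_of_lt (mem_range.mp (mem_filter.mp hk).1))

theorem card_filter_range_two_mul_of_antiperiodic {f : ℕ → ℤ} {N : ℕ}
    (hf : Function.Antiperiodic f N) (hsum : ∀ k, f k + f (k + 1) ≠ 0) :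
    #{k ∈ range (2 * N) | f k * f (k + 1) < 0 ∧ f k + f (k + 1) < 0} =
      #{k ∈ range N | f k * f (k + 1) < 0} := by
  rw [two_mul, card_filter, card_filter, sum_range_add, ← sum_add_distrib]
  refine sum_congr rfl fun k _ => ?_
  have h0 : f (N + k) = -f k := by rw [add_comm, hf]
  have h1 : f (N + k + 1) = -f (k + 1) := by rw [add_assoc, add_comm, hf]
  rw [h0, h1, neg_mul_neg]
  have hneg : -f k + -f (k + 1) < 0 ↔ 0 < f k + f (k + 1) := by constructor <;> intro <;> linarith
  rcases (hsum k).lt_or_gt with h | h <;> simp [hneg, h, h.asymm]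

theorem exists_pair_eq_pos_neg_iff {m : ℕ} {x y : ℤ} (hx : x ≠ 0)
    (hxm : |x| ≤ m) (hym : |y| ≤ m) :
    (∃ a b : ℤ, 1 ≤ a ∧ a < b ∧ b ≤ (m : ℤ) ∧ ({x, y} : Finset ℤ) = {a, -b}) ↔
      x * y < 0 ∧ x + y < 0 := by
  simp only [← coe_inj, coe_pair, Set.pair_eq_pair_iff]
  rw [abs_le] at hxm hym
  constructor
  · rintro ⟨a, b, ha, hab, -, ⟨rfl, rfl⟩ | ⟨rfl, rfl⟩⟩ <;> constructor <;> nlinarith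
  · rintro ⟨hprod, hsum⟩
    rcases hx.lt_or_gt with hx | hx
    · exact ⟨y, -x, by nlinarith, by omega, by omega, .inr ⟨by omega, rfl⟩⟩
    · exact ⟨x, -y, by omega, by omega, by omega, .inl ⟨rfl, by omega⟩⟩

theorem ky_fan_circle_general (N m : ℕ) [NeZero (2 * N)]
    (lab : ZMod (2 * N) → ℤ)
    (hrange : ∀ i, lab i ≠ 0 ∧ |lab i| ≤ (m : ℤ))
    (hequiv : ∀ i, lab (i + (N : ZMod (2 * N))) = -lab i)
    (hnocomp : ∀ i, lab i + lab (i + 1) ≠ 0) :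
    2 ≤ m ∧
    Odd ((Finset.univ.filter fun i : ZMod (2 * N) =>
      ∃ a b : ℤ, 1 ≤ a ∧ a < b ∧ b ≤ (m : ℤ) ∧
        ({lab i, lab (i + 1)} : Finset ℤ) = {a, -b}).card) := by
  set f : ℕ → ℤ := fun k => lab k
  have hf : Function.Antiperiodic f N := fun k => by simp [f, hequiv]
  have hf0 (k : ℕ) : f k ≠ 0 := (hrange k).1
  have hsucc (k : ℕ) : lab ((k : ZMod (2 * N)) + 1) = f (k + 1) := by simp [f]
  have hfsum (k : ℕ) : f k + f (k + 1) ≠ 0 := hsucc k ▸ hnocomp k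
  have hodd : Odd #{i : ZMod (2 * N) | ∃ a b : ℤ, 1 ≤ a ∧ a < b ∧ b ≤ (m : ℤ) ∧
      ({lab i, lab (i + 1)} : Finset ℤ) = {a, -b}} := by
    rw [filter_congr fun i _ => exists_pair_eq_pos_neg_iff (hrange i).1
      (hrange i).2 (hrange (i + 1)).2, ZMod.card_filter_univ_eq_card_filter_range]
    simp only [hsucc]
    rw [card_filter_range_two_mul_of_antiperiodic hf hfsum]
    have hsign (k : ℕ) : f k * f (k + 1) < 0 ↔ ¬(0 < f k ↔ 0 < f (k + 1)) := by
      have := hf0 k; have := hf0 (k + 1); rw [mul_neg_iff]; omega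
    rw [filter_congr fun k _ => hsign k, odd_card_filter_range_changes_iff, ← zero_add N, hf]
    have := hf0 0; omega
  refine ⟨?_, hodd⟩
  obtain ⟨i, hi⟩ := card_pos.mp hodd.pos
  obtain ⟨a, b, ha, hab, hbm, -⟩ := (mem_filter.mp hi).2
  omega

/-- Ky Fan, `n = 1`: An antipodally symmetric triangulation of the
circle `S^1` is a cyclic sequence of `2N` vertices (`N ≥ 2`), modelled by
`ZMod (2N)`, with free involution `i ↦ i + N` and edges `{i, i+1}`.  Let
`λ : ZMod (2N) → {±1, …, ±m}` satisfy `λ(i + N) = -λ(i)` and `λ(i) + λ(i+1) ≠ 0`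
for all `i`.  Then `m ≥ 2` and the number of edges whose label pair has the form
`{+i, -j}` with `1 ≤ i < j ≤ m` is odd. -/
theorem ky_fan_circle (N m : ℕ) [NeZero (2 * N)] (hN : 2 ≤ N)
    (lab : ZMod (2 * N) → ℤ)
    (hrange : ∀ i, lab i ≠ 0 ∧ |lab i| ≤ (m : ℤ))
    (hequiv : ∀ i, lab (i + (N : ZMod (2 * N))) = -lab i)
    (hnocomp : ∀ i, lab i + lab (i + 1) ≠ 0) :
    2 ≤ m ∧
    Odd ((Finset.univ.filter fun i : ZMod (2 * N) =>
      ∃ a b : ℤ, 1 ≤ a ∧ a < b ∧ b ≤ (m : ℤ) ∧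
        ({lab i, lab (i + 1)} : Finset ℤ) = {a, -b}).card) :=
  ky_fan_circle_general N m lab hrange hequiv hnocomp
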